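/- arXiv:1702.03692 — 4 statements merged into one kernel-verified Lean document; each statement's English description precedes it below -/
import Mathlib

section
/- As c → 0⁺, the function c ↦ ∫₀^∞ e^{−x} · (1 − exp(−c/x²)) dx is asymptotically equivalent to √(π·c); that is, the ratio ∫₀^∞ e^{−x}(1 − e^{−c/x²}) dx / √(π·c) tends to 1 as c tends to 0 from the right. -/
open MeasureTheory Real Filter
open Set Topology

/-!
Substituting `x = √c u` turns the integral into `√c ∫₀^∞ e^{-√c u} (1 - e^{-1/u²}) du`. Since
`0 ≤ 1 - e^{-1/u²} ≤ min 1 u⁻²`, dominated convergence sends the last integral to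
`∫₀^∞ (1 - e^{-1/u²}) du` as `c → 0⁺`, and this equals `√π`: the function
`u (1 - e^{-1/u²}) - 2 ∫₀^{1/u} e^{-t²} dt` (found by substituting `t = 1/u` and integrating by
parts) is an antiderivative which tends to `0` at `∞` and to `-√π` at `0⁺`.
-/

theorem integral_Ioi_of_hasDerivAt_of_tendsto_nhdsGT {E : Type*} [NormedAddCommGroup E]
    [NormedSpace ℝ E] [CompleteSpace E] {f f' : ℝ → E} {a : ℝ} {fa fb : E}
    (hderiv : ∀ x ∈ Ioi a, HasDerivAt f (f' x) x) (hint : IntegrableOn f' (Ioi a))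
    (ha : Tendsto f (𝓝[>] a) (𝓝 fa)) (hb : Tendsto f atTop (𝓝 fb)) :
    ∫ x in Ioi a, f' x = fb - fa := by
  rw [← Ici_sdiff_left] at ha
  have hderiv' : ∀ x ∈ Ioi a, HasDerivAt (Function.update f a fa) (f' x) x := fun x hx =>
    (hderiv x hx).congr_of_eventuallyEq <|
      (eventually_ne_nhds (ne_of_gt hx)).mono fun y hy => Function.update_of_ne hy _ _
  have hb' : Tendsto (Function.update f a fa) atTop (𝓝 fb) :=
    hb.congr' <| (eventually_ne_atTop a).mono fun x hx => (Function.update_of_ne hx _ _).symm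
  simpa using integral_Ioi_of_hasDerivAt_of_tendsto
    (continuousWithinAt_update_same.mpr ha) hderiv' hint hb'

theorem tendsto_setIntegral_exp_neg_mul_Ioi {g : ℝ → ℝ} (hg : IntegrableOn g (Ioi 0)) :
    Tendsto (fun s => ∫ u in Ioi 0, exp (-(s * u)) * g u) (𝓝[≥] 0)
      (𝓝 (∫ u in Ioi 0, g u)) := by
  refine tendsto_integral_filter_of_dominated_convergence (fun u => ‖g u‖) ?_ ?_ hg.norm ?_
  · exact Eventually.of_forall fun s =>
      (continuous_exp.comp (continuous_const.mul continuous_id).neg).aestronglyMeasurable.mul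
        hg.aestronglyMeasurable
  · filter_upwards [self_mem_nhdsWithin] with s (hs : 0 ≤ s)
    filter_upwards [ae_restrict_mem measurableSet_Ioi] with u (hu : 0 < u)
    rw [norm_mul, norm_of_nonneg (exp_pos _).le]
    exact mul_le_of_le_one_left (norm_nonneg _) (exp_le_one_iff.mpr (by nlinarith))
  · refine Eventually.of_forall fun u => ?_
    have : Tendsto (fun s : ℝ => exp (-(s * u))) (𝓝[≥] 0) (𝓝 1) := by
      simpa using ((continuous_id.mul continuous_const).neg.rexp.tendsto' (0 : ℝ) 1
        (by simp)).mono_left nhdsWithin_le_nhds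
    simpa using this.mul_const (g u)

noncomputable def oneSubExpNegInvSq (u : ℝ) : ℝ := 1 - exp (-(u ^ 2)⁻¹)

theorem oneSubExpNegInvSq_nonneg (u : ℝ) : 0 ≤ oneSubExpNegInvSq u :=
  sub_nonneg.mpr (exp_le_one_iff.mpr (neg_nonpos.mpr (by positivity)))

theorem oneSubExpNegInvSq_le_one (u : ℝ) : oneSubExpNegInvSq u ≤ 1 :=
  sub_le_self _ (exp_pos _).le

theorem oneSubExpNegInvSq_le_inv_sq (u : ℝ) : oneSubExpNegInvSq u ≤ (u ^ 2)⁻¹ := by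
  have := add_one_le_exp (-(u ^ 2)⁻¹)
  rw [oneSubExpNegInvSq]
  linarith

theorem measurable_oneSubExpNegInvSq : Measurable oneSubExpNegInvSq := by
  unfold oneSubExpNegInvSq
  fun_prop

theorem integrableOn_oneSubExpNegInvSq : IntegrableOn oneSubExpNegInvSq (Ioi 0) := by
  have hmeas := measurable_oneSubExpNegInvSq.aestronglyMeasurable (μ := volume)
  have hnorm (u : ℝ) : ‖oneSubExpNegInvSq u‖ = oneSubExpNegInvSq u :=
    norm_of_nonneg (oneSubExpNegInvSq_nonneg u)
  rw [← Ioc_union_Ioi_eq_Ioi zero_le_one]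
  refine IntegrableOn.union ?_ ?_
  · exact Measure.integrableOn_of_bounded (M := 1) (by simp) hmeas
      (Eventually.of_forall fun u => (hnorm u).trans_le (oneSubExpNegInvSq_le_one u))
  · refine (integrableOn_Ioi_rpow_of_lt (by norm_num : (-2 : ℝ) < -1) one_pos).mono'
      hmeas.restrict ?_
    filter_upwards [ae_restrict_mem measurableSet_Ioi] with u (hu : 1 < u)
    rw [hnorm, rpow_neg (by linarith), rpow_two]
    exact oneSubExpNegInvSq_le_inv_sq u

theorem hasDerivAt_intervalIntegral_exp_neg_sq (y : ℝ) :
    HasDerivAt (fun y => ∫ t in (0 : ℝ)..y, exp (-t ^ 2)) (exp (-y ^ 2)) y := by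
  have hcont : Continuous fun t : ℝ => exp (-t ^ 2) := by fun_prop
  exact intervalIntegral.integral_hasDerivAt_right (hcont.intervalIntegrable _ _)
    hcont.stronglyMeasurable.stronglyMeasurableAtFilter hcont.continuousAt

noncomputable def oneSubExpNegInvSqPrimitive (u : ℝ) : ℝ :=
  u * oneSubExpNegInvSq u - 2 * ∫ t in (0 : ℝ)..u⁻¹, exp (-t ^ 2)

theorem hasDerivAt_oneSubExpNegInvSqPrimitive {u : ℝ} (hu : 0 < u) :
    HasDerivAt oneSubExpNegInvSqPrimitive (oneSubExpNegInvSq u) u := by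
  have hsq : HasDerivAt (fun u : ℝ => u ^ 2) (2 * u) u := by simpa using hasDerivAt_pow 2 u
  have hf : HasDerivAt oneSubExpNegInvSq (-(exp (-(u ^ 2)⁻¹) * -(-(2 * u) / (u ^ 2) ^ 2))) u :=
    ((hsq.inv (by positivity)).neg.exp).const_sub 1
  have hΦ := (hasDerivAt_intervalIntegral_exp_neg_sq u⁻¹).comp u (hasDerivAt_inv hu.ne')
  refine (((hasDerivAt_id u).mul hf).sub (hΦ.const_mul 2)).congr_deriv ?_
  rw [id, inv_pow]
  field_simp
  ring

theorem tendsto_oneSubExpNegInvSqPrimitive_atTop :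
    Tendsto oneSubExpNegInvSqPrimitive atTop (𝓝 0) := by
  have hmul : Tendsto (fun u => u * oneSubExpNegInvSq u) atTop (𝓝 0) := by
    refine squeeze_zero' ?_ ?_ tendsto_inv_atTop_zero
    all_goals filter_upwards [eventually_gt_atTop 0] with u hu
    · exact mul_nonneg hu.le (oneSubExpNegInvSq_nonneg u)
    · calc u * oneSubExpNegInvSq u ≤ u * (u ^ 2)⁻¹ :=
            mul_le_mul_of_nonneg_left (oneSubExpNegInvSq_le_inv_sq u) hu.le
        _ = u⁻¹ := by field_simp
  have hΦ : Tendsto (fun u : ℝ => ∫ t in (0 : ℝ)..u⁻¹, exp (-t ^ 2)) atTop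
      (𝓝 (∫ t in (0 : ℝ)..0, exp (-t ^ 2))) :=
    (hasDerivAt_intervalIntegral_exp_neg_sq 0).continuousAt.tendsto.comp tendsto_inv_atTop_zero
  have := hmul.sub (hΦ.const_mul 2)
  rwa [intervalIntegral.integral_same, mul_zero, sub_zero] at this

theorem tendsto_oneSubExpNegInvSqPrimitive_nhdsGT_zero :
    Tendsto oneSubExpNegInvSqPrimitive (𝓝[>] 0) (𝓝 (-√π)) := by
  have hmul : Tendsto (fun u => u * oneSubExpNegInvSq u) (𝓝[>] 0) (𝓝 0) := by
    refine squeeze_zero' ?_ ?_ (tendsto_id.mono_left nhdsWithin_le_nhds)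
    all_goals filter_upwards [self_mem_nhdsWithin] with u (hu : 0 < u)
    · exact mul_nonneg hu.le (oneSubExpNegInvSq_nonneg u)
    · exact mul_le_of_le_one_right hu.le (oneSubExpNegInvSq_le_one u)
  have hΦ : Tendsto (fun u : ℝ => ∫ t in (0 : ℝ)..u⁻¹, exp (-t ^ 2)) (𝓝[>] 0) (𝓝 (√π / 2)) := by
    have hgauss : IntegrableOn (fun t : ℝ => exp (-t ^ 2)) (Ioi 0) := by
      simpa using (integrable_exp_neg_mul_sq one_pos).integrableOn
    have hgauss_eq : ∫ t in Ioi (0 : ℝ), exp (-t ^ 2) = √π / 2 := by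
      simpa using integral_gaussian_Ioi 1
    simpa [hgauss_eq] using intervalIntegral_tendsto_integral_Ioi 0 hgauss tendsto_inv_nhdsGT_zero
  have := hmul.sub (hΦ.const_mul 2)
  rwa [zero_sub, mul_div_cancel₀ _ two_ne_zero] at this

theorem integral_oneSubExpNegInvSq : ∫ u in Ioi 0, oneSubExpNegInvSq u = √π := by
  rw [integral_Ioi_of_hasDerivAt_of_tendsto_nhdsGT
    (fun _ hu => hasDerivAt_oneSubExpNegInvSqPrimitive hu) integrableOn_oneSubExpNegInvSq
    tendsto_oneSubExpNegInvSqPrimitive_nhdsGT_zero tendsto_oneSubExpNegInvSqPrimitive_atTop]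
  ring

theorem integral_exp_neg_mul_one_sub_exp_neg_div_sq {c : ℝ} (hc : 0 < c) :
    ∫ x in Ioi 0, exp (-x) * (1 - exp (-(c / x ^ 2))) =
      √c * ∫ u in Ioi 0, exp (-(√c * u)) * oneSubExpNegInvSq u := by
  have hs : 0 < √c := sqrt_pos.mpr hc
  have hsubst := integral_comp_mul_left_Ioi (fun x => exp (-x) * (1 - exp (-(c / x ^ 2)))) 0 hs
  rw [mul_zero, smul_eq_mul] at hsubst
  have hcongr : ∫ u in Ioi 0, exp (-(√c * u)) * oneSubExpNegInvSq u =
      ∫ u in Ioi 0, exp (-(√c * u)) * (1 - exp (-(c / (√c * u) ^ 2))) := by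
    refine setIntegral_congr_fun measurableSet_Ioi fun u _ => ?_
    rw [oneSubExpNegInvSq, mul_pow, sq_sqrt hc.le, div_mul_cancel_left₀ hc.ne']
  rw [hcongr, hsubst, mul_inv_cancel_left₀ hs.ne']

/-- As `c → 0⁺`, `∫₀^∞ e^{−x}·(1 − exp(−c/x²)) dx` is asymptotically equivalent to
`√(π·c)`: the ratio tends to `1` as `c → 0⁺`. -/
theorem integral_exp_one_sub_exp_asymptotic :
    Tendsto (fun c : ℝ =>
        (∫ x in Set.Ioi (0 : ℝ), Real.exp (-x) * (1 - Real.exp (-(c / x ^ 2)))) /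
          Real.sqrt (π * c))
      (nhdsWithin 0 (Set.Ioi 0)) (nhds 1) := by
  have hsqrt : Tendsto Real.sqrt (𝓝[>] 0) (𝓝[≥] 0) :=
    tendsto_nhdsWithin_iff.mpr ⟨(continuous_sqrt.tendsto' 0 0 sqrt_zero).mono_left
      nhdsWithin_le_nhds, Eventually.of_forall fun c => sqrt_nonneg c⟩
  have hlaplace := (tendsto_setIntegral_exp_neg_mul_Ioi integrableOn_oneSubExpNegInvSq).comp hsqrt
  rw [integral_oneSubExpNegInvSq] at hlaplace
  have hπ : √π ≠ 0 := (sqrt_pos.mpr pi_pos).ne'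
  refine (div_self hπ ▸ hlaplace.div_const √π).congr' ?_
  filter_upwards [self_mem_nhdsWithin] with c (hc : 0 < c)
  rw [Function.comp_apply, integral_exp_neg_mul_one_sub_exp_neg_div_sq hc, sqrt_mul pi_pos.le,
    mul_comm √π, mul_div_mul_left _ _ (sqrt_pos.mpr hc).ne']
end

section
/- Let X and Y be independent random variables, X exponentially distributed with mean λ_sr > 0 and Y exponentially distributed with mean λ_rd > 0, and let γ_th > 0 be fixed. Then, as b̂ → ∞, the asymptotic outage probability satisfies P( b̂·X²·Y ≤ γ_th ) ∼ (1/λ_sr) · √( π·γ_th / (b̂·λ_rd) ); that is, the ratio of the two sides tends to 1 as b̂ → ∞. -/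
/-! Given `Y = y > 0`, the outage event is `X ≤ √(γ / (b y))`, so with `c = √(γ / b) / λ_sr` and
`ν` the law of `Y` the outage probability is `∫ (1 - exp (-c / √y)) dν(y)`. As `b → ∞`, `c → 0⁺`,
and since `0 ≤ (1 - exp (-c t)) / c ≤ t → t`, dominated convergence with the `ν`-integrable bound
`y ^ (-1/2)` gives `P ∼ c ∫ y ^ (-1/2) dν = c Γ(1/2) / √λ_rd = c √(π / λ_rd)`. -/

open MeasureTheory ProbabilityTheory Real Filter Set Topology

lemma Real.inv_sqrt_eq_rpow_neg_one_half {y : ℝ} (hy : 0 ≤ y) : (√y)⁻¹ = y ^ (-(1 / 2) : ℝ) := by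
  rw [rpow_neg hy, sqrt_eq_rpow]

namespace ProbabilityTheory

variable {r : ℝ}

lemma expMeasure_eq_withDensity_Ioi (r : ℝ) :
    expMeasure r =
      (volume.restrict (Ioi 0)).withDensity fun y => ENNReal.ofReal (r * exp (-(r * y))) := by
  rw [← withDensity_indicator measurableSet_Ioi]
  refine withDensity_congr_ae ?_
  filter_upwards [volume.ae_ne 0] with y hy
  rcases hy.lt_or_gt with hneg | hpos
  · rw [indicator_of_notMem (notMem_Ioi.2 hneg.le)]
    exact gammaPDF_of_neg hneg
  · rw [indicator_of_mem (mem_Ioi.2 hpos)]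
    exact exponentialPDF_of_nonneg hpos.le

lemma ae_pos_expMeasure (r : ℝ) : ∀ᵐ y ∂expMeasure r, 0 < y := by
  rw [expMeasure_eq_withDensity_Ioi r]
  exact (withDensity_absolutelyContinuous _ _).ae_le (ae_restrict_mem measurableSet_Ioi)

lemma integral_expMeasure (hr : 0 < r) (f : ℝ → ℝ) :
    ∫ y, f y ∂expMeasure r = ∫ y in Ioi 0, r * exp (-(r * y)) * f y := by
  rw [expMeasure_eq_withDensity_Ioi r, integral_withDensity_eq_integral_toReal_smul
    (by fun_prop) (ae_of_all _ fun _ => ENNReal.ofReal_lt_top)]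
  refine integral_congr_ae (ae_of_all _ fun y => ?_)
  simp only [smul_eq_mul]
  rw [ENNReal.toReal_ofReal (by positivity)]

lemma integrable_expMeasure_iff (hr : 0 < r) {f : ℝ → ℝ} :
    Integrable f (expMeasure r) ↔ IntegrableOn (fun y => r * exp (-(r * y)) * f y) (Ioi 0) := by
  rw [expMeasure_eq_withDensity_Ioi r, integrable_withDensity_iff_integrable_smul'
    (by fun_prop) (ae_of_all _ fun _ => ENNReal.ofReal_lt_top)]
  refine integrable_congr (ae_of_all _ fun y => ?_)
  simp only [smul_eq_mul]
  rw [ENNReal.toReal_ofReal (by positivity)]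

lemma integrable_inv_sqrt_expMeasure (hr : 0 < r) :
    Integrable (fun y => (√y)⁻¹) (expMeasure r) := by
  rw [integrable_expMeasure_iff hr]
  refine IntegrableOn.congr_fun
    ((integrableOn_rpow_mul_exp_neg_mul_rpow (s := -(1 / 2)) (by norm_num) one_pos hr).const_mul r)
    (fun y hy => ?_) measurableSet_Ioi
  rw [rpow_one, neg_mul, ← Real.inv_sqrt_eq_rpow_neg_one_half (le_of_lt hy)]
  ring

lemma integral_inv_sqrt_expMeasure (hr : 0 < r) : ∫ y, (√y)⁻¹ ∂expMeasure r = √(π * r) := by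
  rw [integral_expMeasure hr]
  calc ∫ y in Ioi 0, r * exp (-(r * y)) * (√y)⁻¹
      = r * ∫ y in Ioi 0, y ^ ((1 / 2 : ℝ) - 1) * exp (-(r * y)) := by
        rw [← integral_const_mul]
        refine setIntegral_congr_fun measurableSet_Ioi fun y hy => ?_
        rw [show (1 / 2 : ℝ) - 1 = -(1 / 2) by norm_num,
          ← Real.inv_sqrt_eq_rpow_neg_one_half (le_of_lt hy)]
        ring
    _ = √(π * r) := by
        rw [integral_rpow_mul_exp_neg_mul_Ioi one_half_pos hr, Gamma_one_half_eq, ← sqrt_eq_rpow,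
          sqrt_mul pi_pos.le, one_div, sqrt_inv]
        field_simp
        rw [sq_sqrt hr.le]

lemma measureReal_expMeasure_setOf_sq_le (hr : 0 < r) (t : ℝ) :
    (expMeasure r).real {x | x ^ 2 ≤ t} = 1 - exp (-(r * √t)) := by
  have : IsProbabilityMeasure (expMeasure r) := isProbabilityMeasure_expMeasure hr
  have hset : {x : ℝ | x ^ 2 ≤ t} =ᵐ[expMeasure r] Iic √t := by
    filter_upwards [ae_pos_expMeasure r] with x hx
    exact propext (le_sqrt' hx).symm
  rw [measureReal_congr hset, ← cdf_eq_real, cdf_expMeasure_eq hr, if_pos (sqrt_nonneg t)]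

lemma measureReal_expMeasure_setOf_mul_sq_mul_le (hr : 0 < r) {b y γ : ℝ} (hb : 0 < b)
    (hy : 0 < y) :
    (expMeasure r).real {x | b * x ^ 2 * y ≤ γ} = 1 - exp (-(r * √(γ / b) * (√y)⁻¹)) := by
  have hset : {x : ℝ | b * x ^ 2 * y ≤ γ} = {x | x ^ 2 ≤ γ / b / y} := by
    ext x
    change b * x ^ 2 * y ≤ γ ↔ x ^ 2 ≤ γ / b / y
    rw [le_div_iff₀ hy, le_div_iff₀ hb]
    ring_nf
  rw [hset, measureReal_expMeasure_setOf_sq_le hr, sqrt_div' _ hy.le, div_eq_mul_inv, mul_assoc]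

lemma IndepFun.measureReal_mem_eq_integral {Ω α β : Type*} [MeasurableSpace Ω] [MeasurableSpace α]
    [MeasurableSpace β] {P : Measure Ω} [IsFiniteMeasure P] {X : Ω → α} {Y : Ω → β}
    (hX : Measurable X) (hY : Measurable Y) (hXY : IndepFun X Y P) {s : Set (α × β)}
    (hs : MeasurableSet s) :
    P.real {ω | (X ω, Y ω) ∈ s} = ∫ y, (P.map X).real {x | (x, y) ∈ s} ∂P.map Y := by
  have hmap := (indepFun_iff_map_prod_eq_prod_map_map hX.aemeasurable hY.aemeasurable).1 hXY
  calc P.real {ω | (X ω, Y ω) ∈ s} = ((P.map X).prod (P.map Y)).real s := by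
        rw [← hmap, map_measureReal_apply (hX.prodMk hY) hs]
        rfl
    _ = ∫ y, (P.map X).real {x | (x, y) ∈ s} ∂P.map Y := by
        rw [measureReal_def, Measure.prod_apply_symm hs, ← integral_toReal
          (measurable_measure_prodMk_right hs).aemeasurable (ae_of_all _ fun _ => measure_lt_top _ _)]
        rfl

end ProbabilityTheory

lemma tendsto_one_sub_exp_neg_mul_div (s : ℝ) :
    Tendsto (fun c => (1 - exp (-(c * s))) / c) (𝓝[>] 0) (𝓝 s) := by
  have hderiv : HasDerivAt (fun c => 1 - exp (-(c * s))) s 0 := by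
    simpa using ((hasDerivAt_mul_const (x := (0 : ℝ)) s).neg.exp).const_sub 1
  refine hderiv.tendsto_slope_zero_right.congr fun c => ?_
  simp only [zero_add, zero_mul, neg_zero, exp_zero, smul_eq_mul]
  ring

lemma tendsto_integral_one_sub_exp_neg_mul_div {α : Type*} [MeasurableSpace α] {μ : Measure α}
    {g : α → ℝ} (hg : Integrable g μ) (hg0 : 0 ≤ᵐ[μ] g) :
    Tendsto (fun c => (∫ x, (1 - exp (-(c * g x))) ∂μ) / c) (𝓝[>] 0) (𝓝 (∫ x, g x ∂μ)) := by
  simp only [← integral_div]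
  refine tendsto_integral_filter_of_dominated_convergence g
    (Eventually.of_forall fun c => ?_) ?_ hg
    (ae_of_all _ fun x => tendsto_one_sub_exp_neg_mul_div (g x))
  · exact (by fun_prop : Continuous fun t => (1 - exp (-(c * t))) / c).comp_aestronglyMeasurable
      hg.aestronglyMeasurable
  · filter_upwards [self_mem_nhdsWithin] with c (hc : 0 < c)
    filter_upwards [hg0] with x hx
    have hlower : 0 ≤ 1 - exp (-(c * g x)) :=
      sub_nonneg.2 (exp_le_one_iff.2 (neg_nonpos.2 (mul_nonneg hc.le hx)))
    rw [norm_of_nonneg (div_nonneg hlower hc.le), div_le_iff₀ hc]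
    linarith [one_sub_le_exp_neg (c * g x)]

/-- For independent exponential `X` (mean `λ_sr`) and `Y` (mean `λ_rd`) and fixed
`γ_th > 0`, as `b̂ → ∞`, `P(b̂·X²·Y ≤ γ_th) ∼ (1/λ_sr)·√(π·γ_th/(b̂·λ_rd))`; that is, the ratio
of the two sides tends to `1`. -/
theorem asymptotic_outage_equiv
    {Ω : Type*} [MeasurableSpace Ω] (P : Measure Ω) [IsProbabilityMeasure P]
    (X Y : Ω → ℝ) (hX : Measurable X) (hY : Measurable Y)
    (hXY : IndepFun X Y P)
    (lsr lrd : ℝ) (hlsr : 0 < lsr) (hlrd : 0 < lrd)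
    (hXd : Measure.map X P = expMeasure lsr⁻¹)
    (hYd : Measure.map Y P = expMeasure lrd⁻¹)
    (γth : ℝ) (hγth : 0 < γth) :
    Tendsto (fun b : ℝ =>
        (P {ω | b * X ω ^ 2 * Y ω ≤ γth}).toReal /
          ((1 / lsr) * Real.sqrt (π * γth / (b * lrd))))
      atTop (nhds 1) := by
  have ha : 0 < lsr⁻¹ := inv_pos.2 hlsr
  have hr : 0 < lrd⁻¹ := inv_pos.2 hlrd
  set c : ℝ → ℝ := fun b => lsr⁻¹ * √(γth / b)
  have hc : Tendsto c atTop (𝓝[>] 0) := by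
    refine tendsto_nhdsWithin_iff.2 ⟨?_, ?_⟩
    · simpa [c] using ((continuous_sqrt.tendsto 0).comp
        (tendsto_const_nhds.div_atTop tendsto_id)).const_mul lsr⁻¹
    · filter_upwards [eventually_gt_atTop 0] with b hb
      exact mul_pos ha (sqrt_pos.2 (div_pos hγth hb))
  have hlim := ((tendsto_integral_one_sub_exp_neg_mul_div (integrable_inv_sqrt_expMeasure hr)
    (ae_of_all _ fun y => inv_nonneg.2 (sqrt_nonneg y))).comp hc).div_const √(π * lrd⁻¹)
  rw [integral_inv_sqrt_expMeasure hr, div_self (by positivity)] at hlim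
  refine hlim.congr' ?_
  filter_upwards [eventually_gt_atTop 0] with b hb
  have houtage : (P {ω | b * X ω ^ 2 * Y ω ≤ γth}).toReal
      = ∫ y, 1 - exp (-(c b * (√y)⁻¹)) ∂expMeasure lrd⁻¹ := by
    refine (hXY.measureReal_mem_eq_integral hX hY
      (s := {p : ℝ × ℝ | b * p.1 ^ 2 * p.2 ≤ γth}) (by measurability)).trans ?_
    rw [hXd, hYd]
    refine integral_congr_ae ?_
    filter_upwards [ae_pos_expMeasure lrd⁻¹] with y hy
    exact measureReal_expMeasure_setOf_mul_sq_mul_le ha hb hy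
  have hdenom : (1 / lsr) * √(π * γth / (b * lrd)) = c b * √(π * lrd⁻¹) := by
    rw [mul_assoc, ← sqrt_mul (div_pos hγth hb).le, one_div]
    congr 2
    field_simp
  rw [Function.comp_apply, houtage, hdenom, div_div]
end

section
/- Let X and Y be independent random variables, X exponentially distributed with mean λ_sr > 0 and Y exponentially distributed with mean λ_rd > 0, and fix γ_th > 0. Then the diversity order of the noncoherent SWIPT relay system in the high-first-hop-SNR regime equals 1/2: lim_{b̂ → ∞} ( − log P( b̂·X²·Y ≤ γ_th ) / log b̂ ) = 1/2. -/
open MeasureTheory ProbabilityTheory Real Filter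

open Set Asymptotics Topology

/-! If `X` and `Y` are independent exponentials with rates `r₁` and `r₂`, then `P(X²Y ≤ t) ≍ √t`
as `t → 0⁺`. From below, the event contains `{0 ≤ X ≤ √t, Y ≤ 1}`. From above, condition on
`X = x`: the part `x ≤ √t` costs at most `P(X ≤ √t) ≤ r₁√t`, and the part `x > √t` at most
`∫_{√t}^∞ r₁ · r₂t/x² dx = r₁r₂√t`, because the density of `X` is bounded by `r₁` and
`P(Y ≤ s) ≤ r₂s`. With `t = γ/b` this gives `-log P(bX²Y ≤ γ) = ½ log b + O(1)`. -/

theorem tendsto_neg_log_div_log_of_isTheta {f : ℝ → ℝ} {d : ℝ}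
    (hf : f =Θ[atTop] fun b => b ^ (-d)) :
    Tendsto (fun b => -log (f b) / log b) atTop (𝓝 d) := by
  obtain ⟨C, hC⟩ := hf.1.bound
  obtain ⟨c, hc0, hc⟩ := hf.2.exists_pos
  have hbounded : (fun b => log (f b) + d * log b) =O[atTop] fun _ => (1 : ℝ) := by
    refine IsBigO.of_bound (max |log C| |log c|) ?_
    filter_upwards [hC, hc.bound, eventually_gt_atTop 0] with b hCb hcb hb
    have hpow : 0 < b ^ (-d) := rpow_pos_of_pos hb _
    rw [norm_of_nonneg hpow.le] at hCb hcb
    have hfb : 0 < ‖f b‖ := pos_of_mul_pos_right (hpow.trans_le hcb) hc0.le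
    have hC0 : 0 < C := pos_of_mul_pos_left (hfb.trans_le hCb) hpow.le
    have hlogpow : log (b ^ (-d)) = -d * log b := log_rpow hb _
    have hupper := log_le_log hfb hCb
    have hlower := log_le_log hpow hcb
    rw [log_mul hC0.ne' hpow.ne', hlogpow] at hupper
    rw [log_mul hc0.ne' hfb.ne', hlogpow] at hlower
    rw [Real.norm_eq_abs, ← log_abs, norm_one, mul_one, abs_le]
    rw [Real.norm_eq_abs] at hupper hlower
    exact ⟨by linarith [le_abs_self (log c), le_max_right |log C| |log c|],
      by linarith [le_abs_self (log C), le_max_left |log C| |log c|]⟩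
  have hsmall := (hbounded.trans_isLittleO isLittleO_const_log_atTop).tendsto_div_nhds_zero
  rw [← sub_zero d]
  refine (tendsto_const_nhds.sub hsmall).congr' ?_
  filter_upwards [eventually_gt_atTop 1] with b hb
  have := (log_pos hb).ne'
  field_simp
  ring

theorem tendsto_neg_log_comp_const_div_div_log {F : ℝ → ℝ} {d γ : ℝ} (hγ : 0 < γ)
    (hF : F =Θ[𝓝[>] 0] fun t => t ^ d) :
    Tendsto (fun b => -log (F (γ / b)) / log b) atTop (𝓝 d) := by
  have hlim : Tendsto (fun b => γ / b) atTop (𝓝[>] 0) :=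
    tendsto_nhdsWithin_iff.2 ⟨tendsto_const_nhds.div_atTop tendsto_id,
      (eventually_gt_atTop 0).mono fun b hb => div_pos hγ hb⟩
  refine tendsto_neg_log_div_log_of_isTheta
    (IsTheta.trans ⟨hF.1.comp_tendsto hlim, hF.2.comp_tendsto hlim⟩ ?_)
  have hpow : (fun b => (γ / b) ^ d) =ᶠ[atTop] fun b => γ ^ d * b ^ (-d) := by
    filter_upwards [eventually_gt_atTop 0] with b hb
    rw [div_rpow hγ.le hb.le, rpow_neg hb.le, div_eq_mul_inv]
  exact hpow.trans_isTheta ((isTheta_const_mul_left (rpow_pos_of_pos hγ d).ne').2 isTheta_rfl)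

theorem one_sub_exp_neg_le (x : ℝ) : 1 - exp (-x) ≤ x := by
  linarith [one_sub_le_exp_neg x]

theorem div_two_le_one_sub_exp_neg {x : ℝ} (h0 : 0 ≤ x) (h1 : x ≤ 1) :
    x / 2 ≤ 1 - exp (-x) := by
  have h : exp (-x) * (1 + x) ≤ 1 := by
    calc exp (-x) * (1 + x) ≤ exp (-x) * exp x := by gcongr; linarith [add_one_le_exp x]
      _ = 1 := by rw [← exp_add, neg_add_cancel, exp_zero]
  nlinarith [exp_pos (-x)]

section Exponential

variable {r x : ℝ}

theorem expMeasure_Iic_of_nonneg (hr : 0 < r) (hx : 0 ≤ x) :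
    expMeasure r (Iic x) = ENNReal.ofReal (1 - exp (-(r * x))) := by
  rw [expMeasure, gammaMeasure, withDensity_apply _ measurableSet_Iic]
  exact (lintegral_exponentialPDF_eq_antiDeriv hr x).trans (by rw [if_pos hx])

theorem expMeasure_Iic_le (hr : 0 < r) (hx : 0 ≤ x) :
    expMeasure r (Iic x) ≤ ENNReal.ofReal (r * x) := by
  rw [expMeasure_Iic_of_nonneg hr hx]
  exact ENNReal.ofReal_le_ofReal (one_sub_exp_neg_le _)

theorem expMeasure_Iio_zero (r : ℝ) : expMeasure r (Iio 0) = 0 := by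
  rw [expMeasure, gammaMeasure, withDensity_apply _ measurableSet_Iio]
  exact lintegral_exponentialPDF_of_nonpos le_rfl

theorem expMeasure_Icc_zero (r : ℝ) (hx : 0 ≤ x) :
    expMeasure r (Icc 0 x) = expMeasure r (Iic x) := by
  rw [← Iio_union_Icc_eq_Iic hx,
    measure_union ((Iio_disjoint_Ici le_rfl).mono_right Icc_subset_Ici_self) measurableSet_Icc,
    expMeasure_Iio_zero, zero_add]

theorem exponentialPDF_le (hr : 0 ≤ r) (x : ℝ) : exponentialPDF r x ≤ ENNReal.ofReal r := by
  rw [exponentialPDF_eq]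
  refine ENNReal.ofReal_le_ofReal ?_
  split_ifs with hx
  · exact mul_le_of_le_one_right hr (exp_le_one_iff.2 (by nlinarith))
  · exact hr

theorem expMeasure_le_smul_volume (hr : 0 ≤ r) : expMeasure r ≤ ENNReal.ofReal r • volume := by
  rw [← withDensity_const]
  exact withDensity_mono (Eventually.of_forall (exponentialPDF_le hr))

end Exponential

theorem lintegral_Ioi_div_sq {a : ℝ} (ha : 0 < a) {c : ℝ} (hc : 0 ≤ c) :
    ∫⁻ x in Ioi a, ENNReal.ofReal (c / x ^ 2) = ENNReal.ofReal (c / a) := by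
  have hpow : EqOn (fun x : ℝ => c / x ^ 2) (fun x => c * x ^ (-2 : ℝ)) (Ioi a) := fun x hx => by
    simp only [rpow_neg (ha.trans hx).le, div_eq_mul_inv]; norm_cast
  have hint : IntegrableOn (fun x : ℝ => c * x ^ (-2 : ℝ)) (Ioi a) :=
    (integrableOn_Ioi_rpow_of_lt (by norm_num) ha).const_mul c
  rw [setLIntegral_congr_fun measurableSet_Ioi (fun x hx => congrArg ENNReal.ofReal (hpow hx)),
    ← ofReal_integral_eq_lintegral_ofReal hint
      ((ae_restrict_iff' measurableSet_Ioi).2 (Eventually.of_forall fun x hx => by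
        have := (ha.trans hx).le; positivity)),
    integral_const_mul, integral_Ioi_rpow_of_lt (by norm_num) ha]
  congr 1
  rw [show (-2 : ℝ) + 1 = -1 by norm_num, rpow_neg_one]
  field_simp

def sqMulSublevel (t : ℝ) : Set (ℝ × ℝ) := {p | p.1 ^ 2 * p.2 ≤ t}

theorem measurableSet_sqMulSublevel (t : ℝ) : MeasurableSet (sqMulSublevel t) :=
  measurableSet_le (by fun_prop) measurable_const

theorem preimage_mk_sqMulSublevel {x : ℝ} (hx : x ≠ 0) (t : ℝ) :
    Prod.mk x ⁻¹' sqMulSublevel t = Iic (t / x ^ 2) := by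
  ext y
  simp [sqMulSublevel, le_div_iff₀ (by positivity : 0 < x ^ 2), mul_comm]

theorem Icc_prod_Iic_subset_sqMulSublevel {t : ℝ} (ht : 0 ≤ t) :
    Icc 0 √t ×ˢ Iic 1 ⊆ sqMulSublevel t := by
  rintro ⟨x, y⟩ ⟨⟨hx0, hxt⟩, hy : y ≤ 1⟩
  have hx2 : x ^ 2 ≤ t := by nlinarith [sq_sqrt ht]
  change x ^ 2 * y ≤ t
  rcases le_total y 0 with hy0 | hy0
  · nlinarith [sq_nonneg x]
  · nlinarith [mul_le_mul_of_nonneg_right hx2 hy0]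

section ProdExpMeasure

variable {r₁ r₂ t : ℝ} (h₁ : 0 < r₁) (h₂ : 0 < r₂)
include h₁ h₂

theorem prod_expMeasure_sqMulSublevel_le (ht : 0 ≤ t) {a : ℝ} (ha : 0 < a) :
    (expMeasure r₁).prod (expMeasure r₂) (sqMulSublevel t)
      ≤ ENNReal.ofReal (r₁ * a + r₁ * (r₂ * t / a)) := by
  have := isProbabilityMeasure_expMeasure h₂
  rw [Measure.prod_apply (measurableSet_sqMulSublevel t),
    ← lintegral_add_compl _ measurableSet_Iic (μ := expMeasure r₁), compl_Iic,
    ENNReal.ofReal_add (by positivity) (by positivity),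
    ENNReal.ofReal_mul (q := r₂ * t / a) h₁.le]
  gcongr
  · calc ∫⁻ x in Iic a, expMeasure r₂ (Prod.mk x ⁻¹' sqMulSublevel t) ∂expMeasure r₁
        ≤ ∫⁻ _ in Iic a, 1 ∂expMeasure r₁ := lintegral_mono fun _ => prob_le_one
      _ = expMeasure r₁ (Iic a) := setLIntegral_one _
      _ ≤ ENNReal.ofReal (r₁ * a) := expMeasure_Iic_le h₁ ha.le
  · calc ∫⁻ x in Ioi a, expMeasure r₂ (Prod.mk x ⁻¹' sqMulSublevel t) ∂expMeasure r₁
        ≤ ∫⁻ x in Ioi a, ENNReal.ofReal (r₂ * t / x ^ 2) ∂expMeasure r₁ := by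
          refine setLIntegral_mono (by fun_prop) fun x hx => ?_
          have hx0 : 0 < x := ha.trans hx
          rw [preimage_mk_sqMulSublevel hx0.ne', mul_div_assoc]
          exact expMeasure_Iic_le h₂ (by positivity)
      _ ≤ ∫⁻ x in Ioi a, ENNReal.ofReal (r₂ * t / x ^ 2) ∂(ENNReal.ofReal r₁ • volume) :=
          lintegral_mono' (Measure.restrict_mono subset_rfl (expMeasure_le_smul_volume h₁.le))
            le_rfl
      _ = ENNReal.ofReal r₁ * ENNReal.ofReal (r₂ * t / a) := by
          rw [Measure.restrict_smul, lintegral_smul_measure, smul_eq_mul,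
            lintegral_Ioi_div_sq ha (by positivity)]

theorem le_prod_expMeasure_sqMulSublevel (ht : 0 ≤ t) (hsmall : r₁ * √t ≤ 1) :
    ENNReal.ofReal (r₁ * √t / 2 * (1 - exp (-r₂)))
      ≤ (expMeasure r₁).prod (expMeasure r₂) (sqMulSublevel t) := by
  have := isProbabilityMeasure_expMeasure h₁
  have := isProbabilityMeasure_expMeasure h₂
  have hfirst := div_two_le_one_sub_exp_neg (by positivity) hsmall
  calc ENNReal.ofReal (r₁ * √t / 2 * (1 - exp (-r₂)))
      ≤ ENNReal.ofReal (1 - exp (-(r₁ * √t))) * ENNReal.ofReal (1 - exp (-(r₂ * 1))) := by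
        rw [mul_one, ← ENNReal.ofReal_mul (by linarith [(by positivity : 0 ≤ r₁ * √t / 2)])]
        gcongr
        exact sub_nonneg.2 (exp_le_one_iff.2 (neg_nonpos.2 h₂.le))
    _ = (expMeasure r₁).prod (expMeasure r₂) (Icc 0 √t ×ˢ Iic 1) := by
        rw [Measure.prod_prod, expMeasure_Icc_zero _ (sqrt_nonneg t),
          expMeasure_Iic_of_nonneg h₁ (sqrt_nonneg t), expMeasure_Iic_of_nonneg h₂ zero_le_one]
    _ ≤ (expMeasure r₁).prod (expMeasure r₂) (sqMulSublevel t) :=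
        measure_mono (Icc_prod_Iic_subset_sqMulSublevel ht)

theorem isTheta_prod_expMeasure_sqMulSublevel :
    (fun t => ((expMeasure r₁).prod (expMeasure r₂) (sqMulSublevel t)).toReal)
      =Θ[𝓝[>] 0] fun t => t ^ (1 / 2 : ℝ) := by
  have hsmall : ∀ᶠ t in 𝓝[>] 0, r₁ * √t ≤ 1 := by
    have : Tendsto (fun t => r₁ * √t) (𝓝 0) (𝓝 0) := by
      simpa using (continuous_sqrt.tendsto 0).const_mul r₁
    exact nhdsWithin_le_nhds (this.eventually (eventually_le_nhds one_pos))
  simp_rw [← sqrt_eq_rpow]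
  constructor
  · refine IsBigO.of_bound (r₁ + r₁ * r₂) ?_
    filter_upwards [self_mem_nhdsWithin] with t (ht : 0 < t)
    have hsqrt : 0 < √t := sqrt_pos.2 ht
    rw [norm_of_nonneg ENNReal.toReal_nonneg, norm_of_nonneg hsqrt.le]
    refine ENNReal.toReal_le_of_le_ofReal (by positivity)
      ((prod_expMeasure_sqMulSublevel_le h₁ h₂ ht.le hsqrt).trans_eq ?_)
    congr 1
    field_simp
    rw [sq_sqrt ht.le]
    ring
  · have := isProbabilityMeasure_expMeasure h₁
    have := isProbabilityMeasure_expMeasure h₂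
    have hq : 0 < 1 - exp (-r₂) := sub_pos.2 (exp_lt_one_iff.2 (neg_lt_zero.2 h₂))
    refine IsBigO.of_bound (2 / (r₁ * (1 - exp (-r₂)))) ?_
    filter_upwards [self_mem_nhdsWithin, hsmall] with t (ht : 0 < t) hst
    have hlower := (ENNReal.ofReal_le_iff_le_toReal (measure_ne_top _ _)).1
      (le_prod_expMeasure_sqMulSublevel h₁ h₂ ht.le hst)
    rw [norm_of_nonneg ENNReal.toReal_nonneg, norm_of_nonneg (sqrt_nonneg t)]
    calc √t = 2 / (r₁ * (1 - exp (-r₂))) * (r₁ * √t / 2 * (1 - exp (-r₂))) := by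
          field_simp
      _ ≤ _ := by gcongr

end ProdExpMeasure

/-- For independent exponential `X` (mean `λ_sr`) and `Y` (mean `λ_rd`) and fixed
`γ_th > 0`, the diversity order in the high-first-hop-SNR regime equals `1/2`:
`lim_{b̂ → ∞} (−log P(b̂·X²·Y ≤ γ_th) / log b̂) = 1/2`. -/
theorem diversity_order_eq_half
    {Ω : Type*} [MeasurableSpace Ω] (P : Measure Ω) [IsProbabilityMeasure P]
    (X Y : Ω → ℝ) (hX : Measurable X) (hY : Measurable Y)
    (hXY : IndepFun X Y P)
    (lsr lrd : ℝ) (hlsr : 0 < lsr) (hlrd : 0 < lrd)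
    (hXd : Measure.map X P = expMeasure lsr⁻¹)
    (hYd : Measure.map Y P = expMeasure lrd⁻¹)
    (γth : ℝ) (hγth : 0 < γth) :
    Tendsto (fun b : ℝ =>
        -Real.log (P {ω | b * X ω ^ 2 * Y ω ≤ γth}).toReal / Real.log b)
      atTop (nhds (1 / 2)) := by
  have hlaw : ∀ t, P {ω | X ω ^ 2 * Y ω ≤ t}
      = (expMeasure lsr⁻¹).prod (expMeasure lrd⁻¹) (sqMulSublevel t) := fun t => by
    rw [← hXd, ← hYd, ← (indepFun_iff_map_prod_eq_prod_map_map hX.aemeasurable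
      hY.aemeasurable).1 hXY, Measure.map_apply (hX.prodMk hY) (measurableSet_sqMulSublevel t)]
    rfl
  have hevent : ∀ b > 0, {ω | b * X ω ^ 2 * Y ω ≤ γth} = {ω | X ω ^ 2 * Y ω ≤ γth / b} :=
    fun b hb => by ext ω; simp only [mem_ofPred_eq, le_div_iff₀ hb, mul_assoc, mul_comm b]
  refine (tendsto_neg_log_comp_const_div_div_log hγth
    (isTheta_prod_expMeasure_sqMulSublevel (inv_pos.2 hlsr) (inv_pos.2 hlrd))).congr' ?_
  filter_upwards [eventually_gt_atTop 0] with b hb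
  rw [hevent b hb, hlaw]
end

section
/- As c → ∞, the integral ∫₀^∞ e^{−x} / (1 + c·x²) dx is asymptotically equivalent to π/(2·√c); that is, √c · ∫₀^∞ e^{−x}/(1 + c·x²) dx tends to π/2 as c → ∞. -/
open MeasureTheory Real Filter

/-! The substitution `u = √c · x` turns `√c · ∫₀^∞ e^{-x} / (1 + c x²) dx` into
`∫₀^∞ e^{-u/√c} / (1 + u²) du`; as `c → ∞` the damping factor `e^{-u/√c}` tends to `1`
under the integrable bound `1 / (1 + u²)`, so by dominated convergence the integral tends to
`∫₀^∞ du / (1 + u²) = π / 2`. -/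

theorem tendsto_integral_exp_neg_mul_nhdsGE_zero {f : ℝ → ℝ}
    (hf : IntegrableOn f (Set.Ioi 0)) :
    Tendsto (fun ε => ∫ u in Set.Ioi 0, exp (-(ε * u)) * f u) (nhdsWithin 0 (Set.Ici 0))
      (nhds (∫ u in Set.Ioi 0, f u)) := by
  refine tendsto_integral_filter_of_dominated_convergence (fun u => ‖f u‖) ?_ ?_ hf.norm ?_
  · exact Eventually.of_forall fun ε =>
      (continuous_exp.comp (continuous_const.mul continuous_id).neg).aestronglyMeasurable.mul
        hf.aestronglyMeasurable
  · filter_upwards [self_mem_nhdsWithin] with ε (hε : 0 ≤ ε)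
    filter_upwards [ae_restrict_mem measurableSet_Ioi] with u (hu : 0 < u)
    have hdamp : exp (-(ε * u)) ≤ 1 := exp_le_one_iff.mpr (by nlinarith)
    rw [norm_mul, norm_of_nonneg (exp_pos _).le]
    exact mul_le_of_le_one_left (norm_nonneg _) hdamp
  · refine Eventually.of_forall fun u => ?_
    have hexp : Continuous fun ε : ℝ => exp (-(ε * u)) := by fun_prop
    simpa using ((hexp.tendsto' 0 1 (by simp)).mono_left nhdsWithin_le_nhds).mul_const (f u)

theorem sqrt_mul_integral_exp_neg_div_one_add_mul_sq {c : ℝ} (hc : 0 < c) :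
    √c * ∫ x in Set.Ioi 0, exp (-x) / (1 + c * x ^ 2)
      = ∫ u in Set.Ioi 0, exp (-((√c)⁻¹ * u)) * (1 + u ^ 2)⁻¹ := by
  have hs : 0 < √c := sqrt_pos.mpr hc
  have hsub := integral_comp_mul_left_Ioi
    (fun u => exp (-((√c)⁻¹ * u)) * (1 + u ^ 2)⁻¹) 0 hs
  have hintegrand : ∀ x, exp (-((√c)⁻¹ * (√c * x))) * (1 + (√c * x) ^ 2)⁻¹
      = exp (-x) / (1 + c * x ^ 2) := fun x => by
    rw [inv_mul_cancel_left₀ hs.ne', mul_pow, sq_sqrt hc.le, div_eq_mul_inv]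
  simp only [hintegrand, mul_zero, smul_eq_mul] at hsub
  rw [hsub, mul_inv_cancel_left₀ hs.ne']

/-- As `c → ∞`, `∫₀^∞ e^{−x}/(1 + c·x²) dx` is asymptotically equivalent to
`π/(2·√c)`; that is, `√c · ∫₀^∞ e^{−x}/(1 + c·x²) dx → π/2` as `c → ∞`. -/
theorem integral_exp_div_one_add_sq_asymptotic :
    Tendsto (fun c : ℝ =>
        Real.sqrt c * ∫ x in Set.Ioi (0 : ℝ), Real.exp (-x) / (1 + c * x ^ 2))
      atTop (nhds (π / 2)) := by
  have hdamp : Tendsto (fun c : ℝ => (√c)⁻¹) atTop (nhdsWithin 0 (Set.Ici 0)) :=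
    tendsto_nhdsWithin_mono_right Set.Ioi_subset_Ici_self
      (tendsto_inv_atTop_nhdsGT_zero.comp tendsto_sqrt_atTop)
  have hlim := (tendsto_integral_exp_neg_mul_nhdsGE_zero
    integrable_inv_one_add_sq.integrableOn).comp hdamp
  rw [integral_Ioi_inv_one_add_sq, arctan_zero, sub_zero] at hlim
  refine hlim.congr' ?_
  filter_upwards [eventually_gt_atTop 0] with c hc
  exact (sqrt_mul_integral_exp_neg_div_one_add_mul_sq hc).symm
end
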